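/- arXiv:2205.07229 — 2 statements merged into one kernel-verified Lean document; each statement's English description precedes it below -/
import Mathlib

section
/- Let S be a finite state space and for each s ∈ S let B(s) be a nonempty finite set of admissible perturbed states. For a function Ṽ : S → ℝ define the adversarial Bellman operator (ℒṼ)(s) = min_{ŝ ∈ B(s)} ∑_a π(a | ŝ) ∑_{s'} p(s'|s,a) (R(s,a,s') + γ Ṽ(s')). Then ℒ is a γ-contraction on (ℝ^S, ‖·‖_∞): for all Ṽ₁, Ṽ₂, ‖ℒṼ₁ − ℒṼ₂‖_∞ ≤ γ ‖Ṽ₁ − Ṽ₂‖_∞. -/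
/-! A minimum over a finite set and an average against probability weights are both
1-Lipschitz for the sup norm, so the only contraction comes from the factor `γ` in front of `V`. -/

open Finset

lemma abs_inf'_sub_inf'_le {T : Type*} {s : Finset T} (hs : s.Nonempty)
    {f g : T → ℝ} {K : ℝ} (h : ∀ t ∈ s, |f t - g t| ≤ K) :
    |s.inf' hs f - s.inf' hs g| ≤ K := by
  rw [abs_sub_le_iff]
  constructor
  · obtain ⟨t, ht, hgt⟩ := s.exists_mem_eq_inf' hs g
    have hft : s.inf' hs f ≤ f t := inf'_le f ht
    linarith [(abs_sub_le_iff.mp (h t ht)).1]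
  · obtain ⟨t, ht, hft⟩ := s.exists_mem_eq_inf' hs f
    have hgt : s.inf' hs g ≤ g t := inf'_le g ht
    linarith [(abs_sub_le_iff.mp (h t ht)).2]

lemma abs_sum_mul_sub_sum_mul_le {ι : Type*} {s : Finset ι} {w f g : ι → ℝ} {K : ℝ}
    (hw0 : ∀ i ∈ s, 0 ≤ w i) (hw1 : ∑ i ∈ s, w i = 1) (h : ∀ i ∈ s, |f i - g i| ≤ K) :
    |∑ i ∈ s, w i * f i - ∑ i ∈ s, w i * g i| ≤ K :=
  calc |∑ i ∈ s, w i * f i - ∑ i ∈ s, w i * g i|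
      = |∑ i ∈ s, w i * (f i - g i)| := by simp only [mul_sub, sum_sub_distrib]
    _ ≤ ∑ i ∈ s, |w i * (f i - g i)| := abs_sum_le_sum_abs _ _
    _ ≤ ∑ i ∈ s, w i * K := by
        refine sum_le_sum fun i hi => ?_
        rw [abs_mul, abs_of_nonneg (hw0 i hi)]
        exact mul_le_mul_of_nonneg_left (h i hi) (hw0 i hi)
    _ = K := by rw [← sum_mul, hw1, one_mul]

theorem adversarial_bellman_contraction_general {S T A : Type*}
    [Fintype S] [Nonempty S] [Fintype A]
    (B : S → Finset T) (hB : ∀ s, (B s).Nonempty)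
    (π : T → A → ℝ) (p : S → A → S → ℝ) (R : S → A → S → ℝ) (γ : ℝ)
    (hπ0 : ∀ t a, 0 ≤ π t a) (hπ1 : ∀ t, ∑ a, π t a = 1)
    (hp0 : ∀ s a s', 0 ≤ p s a s') (hp1 : ∀ s a, ∑ s', p s a s' = 1)
    (hγ0 : 0 ≤ γ)
    (L : (S → ℝ) → (S → ℝ))
    (hL : ∀ V s, L V s = (B s).inf' (hB s) fun t =>
      ∑ a, π t a * ∑ s', p s a s' * (R s a s' + γ * V s')) :
    ∀ V₁ V₂ : S → ℝ,
      (Finset.univ.sup' Finset.univ_nonempty fun s => |L V₁ s - L V₂ s|) ≤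
        γ * Finset.univ.sup' Finset.univ_nonempty fun s => |V₁ s - V₂ s| := by
  intro V₁ V₂
  set D := univ.sup' univ_nonempty fun s => |V₁ s - V₂ s|
  have hVD (r : ℝ) (s' : S) : |(r + γ * V₁ s') - (r + γ * V₂ s')| ≤ γ * D := by
    rw [add_sub_add_left_eq_sub, ← mul_sub, abs_mul, abs_of_nonneg hγ0]
    exact mul_le_mul_of_nonneg_left (le_sup' (fun s => |V₁ s - V₂ s|) (mem_univ s')) hγ0
  refine sup'_le _ _ fun s _ => ?_
  rw [hL, hL]
  refine abs_inf'_sub_inf'_le _ fun t _ => ?_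
  refine abs_sum_mul_sub_sum_mul_le (fun a _ => hπ0 t a) (hπ1 t) fun a _ => ?_
  exact abs_sum_mul_sub_sum_mul_le (fun s' _ => hp0 s a s') (hp1 s a) fun s' _ => hVD _ s'

theorem adversarial_bellman_contraction {S T A : Type*}
    [Fintype S] [Nonempty S] [Fintype A]
    (B : S → Finset T) (hB : ∀ s, (B s).Nonempty)
    (π : T → A → ℝ) (p : S → A → S → ℝ) (R : S → A → S → ℝ) (γ M : ℝ)
    (hπ0 : ∀ t a, 0 ≤ π t a) (hπ1 : ∀ t, ∑ a, π t a = 1)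
    (hp0 : ∀ s a s', 0 ≤ p s a s') (hp1 : ∀ s a, ∑ s', p s a s' = 1)
    (hR : ∀ s a s', |R s a s'| ≤ M)
    (hγ0 : 0 ≤ γ) (hγ1 : γ < 1)
    (L : (S → ℝ) → (S → ℝ))
    (hL : ∀ V s, L V s = (B s).inf' (hB s) fun t =>
      ∑ a, π t a * ∑ s', p s a s' * (R s a s' + γ * V s')) :
    ∀ V₁ V₂ : S → ℝ,
      (Finset.univ.sup' Finset.univ_nonempty fun s => |L V₁ s - L V₂ s|) ≤
        γ * Finset.univ.sup' Finset.univ_nonempty fun s => |V₁ s - V₂ s| :=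
  adversarial_bellman_contraction_general B hB π p R γ hπ0 hπ1 hp0 hp1 hγ0 L hL
end

section
/- Fix a state s and probability distributions over actions. For the one-step adversarial Bellman operators ℒ₁ with perturbation set choice using policy π(·|s, ŝ^{−j}) (agent j unattacked) and ℒ₂ using π(·|s, ŝ^j, ŝ^{−j}) minimized over ŝ^j ∈ B^j, we have for any bounded Ṽ with ‖Ṽ‖_∞ ≤ R_max/(1−γ): |(ℒ₁Ṽ)(s) − (ℒ₂Ṽ)(s)| ≤ 2(R_max + γ R_max/(1−γ)) · max_{ŝ^j ∈ B^j} D_TV(π(·|s, ŝ^{−j}), π(·|s, ŝ^j, ŝ^{−j})). -/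
/-!
Each one-step lookahead value `∑ s', p s a s' * (R s a s' + γ * V s')` is an average of rewards
plus discounted values, hence bounded in absolute value by `C = Rmax + γ * Rmax / (1 - γ)`.
The minimum over `B` is attained at some `t₀`, and for that `t₀` Hölder's inequality bounds the
gap by `C * ∑ a, |π₁ a - π₂ t₀ a| = 2 * C * D_TV`, which is at most `2 * C` times the maximal
total variation distance.
-/

open Finset

theorem abs_sum_mul_le_of_abs_le {ι : Type*} {s : Finset ι} {c f : ι → ℝ} {C : ℝ}
    (hf : ∀ i ∈ s, |f i| ≤ C) : |∑ i ∈ s, c i * f i| ≤ (∑ i ∈ s, |c i|) * C :=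
  calc |∑ i ∈ s, c i * f i| ≤ ∑ i ∈ s, |c i| * |f i| := by
        simpa only [abs_mul] using abs_sum_le_sum_abs (fun i => c i * f i) s
    _ ≤ ∑ i ∈ s, |c i| * C :=
        sum_le_sum fun i hi => mul_le_mul_of_nonneg_left (hf i hi) (abs_nonneg _)
    _ = (∑ i ∈ s, |c i|) * C := (sum_mul ..).symm

theorem abs_sum_mul_le_of_probability {ι : Type*} {s : Finset ι} {w f : ι → ℝ} {C : ℝ}
    (hw0 : ∀ i ∈ s, 0 ≤ w i) (hw1 : ∑ i ∈ s, w i = 1) (hf : ∀ i ∈ s, |f i| ≤ C) :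
    |∑ i ∈ s, w i * f i| ≤ C := by
  have h := abs_sum_mul_le_of_abs_le (c := w) hf
  rwa [sum_congr rfl fun i hi => abs_of_nonneg (hw0 i hi), hw1, one_mul] at h

theorem abs_add_mul_le {r v γ ρ ν : ℝ} (hr : |r| ≤ ρ) (hγ : 0 ≤ γ) (hv : |v| ≤ ν) :
    |r + γ * v| ≤ ρ + γ * ν :=
  calc |r + γ * v| ≤ |r| + γ * |v| := by
        simpa only [abs_mul, abs_of_nonneg hγ] using abs_add_le r (γ * v)
    _ ≤ ρ + γ * ν := add_le_add hr (mul_le_mul_of_nonneg_left hv hγ)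

theorem abs_sub_inf'_le_mul_sup' {T : Type*} {B : Finset T} (hB : B.Nonempty) {x c : ℝ}
    {f g : T → ℝ} (hc : 0 ≤ c) (h : ∀ t ∈ B, |x - f t| ≤ c * g t) :
    |x - B.inf' hB f| ≤ c * B.sup' hB g := by
  obtain ⟨t₀, ht₀, hinf⟩ := exists_mem_eq_inf' hB f
  rw [hinf]
  exact (h t₀ ht₀).trans (mul_le_mul_of_nonneg_left (le_sup' g ht₀) hc)

theorem one_step_adversarial_gap_general {S T A : Type*} [Fintype S] [Fintype A]
    (s : S) (B : Finset T) (hB : B.Nonempty)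
    (π₁ : A → ℝ) (π₂ : T → A → ℝ)
    (p : S → A → S → ℝ) (R : S → A → S → ℝ) (V : S → ℝ) (γ Rmax : ℝ)
    (hp0 : ∀ s₀ a s', 0 ≤ p s₀ a s') (hp1 : ∀ s₀ a, ∑ s', p s₀ a s' = 1)
    (hR : ∀ s₀ a s', |R s₀ a s'| ≤ Rmax)
    (hγ0 : 0 ≤ γ) (hγ1 : γ < 1)
    (hV : ∀ s', |V s'| ≤ Rmax / (1 - γ)) :
    |(∑ a, π₁ a * ∑ s', p s a s' * (R s a s' + γ * V s')) -
        B.inf' hB (fun t => ∑ a, π₂ t a * ∑ s', p s a s' * (R s a s' + γ * V s'))| ≤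
      2 * (Rmax + γ * Rmax / (1 - γ)) *
        B.sup' hB (fun t => (1 / 2) * ∑ a, |π₁ a - π₂ t a|) := by
  have hQ : ∀ a, |∑ s', p s a s' * (R s a s' + γ * V s')| ≤ Rmax + γ * Rmax / (1 - γ) :=
    fun a => abs_sum_mul_le_of_probability (fun s' _ => hp0 s a s') (hp1 s a) fun s' _ => by
      rw [mul_div_assoc]
      exact abs_add_mul_le (hR s a s') hγ0 (hV s')
  have hC : 0 ≤ Rmax + γ * Rmax / (1 - γ) := by
    have hV₀ : 0 ≤ Rmax / (1 - γ) := (abs_nonneg _).trans (hV s)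
    have hRmax : 0 ≤ Rmax := by simpa using (le_div_iff₀ (sub_pos.2 hγ1)).1 hV₀
    rw [mul_div_assoc]
    exact add_nonneg hRmax (mul_nonneg hγ0 hV₀)
  refine abs_sub_inf'_le_mul_sup' hB (by linarith) fun t _ => ?_
  calc _ = |∑ a, (π₁ a - π₂ t a) * ∑ s', p s a s' * (R s a s' + γ * V s')| := by
        simp only [sub_mul, sum_sub_distrib]
    _ ≤ (∑ a, |π₁ a - π₂ t a|) * (Rmax + γ * Rmax / (1 - γ)) :=
        abs_sum_mul_le_of_abs_le fun a _ => hQ a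
    _ = _ := by ring

theorem one_step_adversarial_gap {S T A : Type*} [Fintype S] [Fintype A]
    (s : S) (B : Finset T) (hB : B.Nonempty)
    (π₁ : A → ℝ) (π₂ : T → A → ℝ)
    (p : S → A → S → ℝ) (R : S → A → S → ℝ) (V : S → ℝ) (γ Rmax : ℝ)
    (hπ₁0 : ∀ a, 0 ≤ π₁ a) (hπ₁1 : ∑ a, π₁ a = 1)
    (hπ₂0 : ∀ t a, 0 ≤ π₂ t a) (hπ₂1 : ∀ t, ∑ a, π₂ t a = 1)
    (hp0 : ∀ s₀ a s', 0 ≤ p s₀ a s') (hp1 : ∀ s₀ a, ∑ s', p s₀ a s' = 1)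
    (hR : ∀ s₀ a s', |R s₀ a s'| ≤ Rmax)
    (hγ0 : 0 ≤ γ) (hγ1 : γ < 1)
    (hV : ∀ s', |V s'| ≤ Rmax / (1 - γ)) :
    |(∑ a, π₁ a * ∑ s', p s a s' * (R s a s' + γ * V s')) -
        B.inf' hB (fun t => ∑ a, π₂ t a * ∑ s', p s a s' * (R s a s' + γ * V s'))| ≤
      2 * (Rmax + γ * Rmax / (1 - γ)) *
        B.sup' hB (fun t => (1 / 2) * ∑ a, |π₁ a - π₂ t a|) :=
  one_step_adversarial_gap_general s B hB π₁ π₂ p R V γ Rmax hp0 hp1 hR hγ0 hγ1 hV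
end
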